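/- arXiv:2007.05549 — 3 statements merged into one kernel-verified Lean document; each statement's English description precedes it below -/
import Mathlib

section
/- Let X, Y, and ε be random variables on a probability space taking values in finite sets, with ε independent of the pair (X, Y). Let g : E × 𝒴 → 𝒴 be an augmentation function and set Y' = g(ε, Y). Assume the map (e, x, y) ↦ (x, g(e, y)) is one-to-one on the support of (ε, X, Y). Then the conditional entropy satisfies H(Y' | X) = H(Y | X) + H(ε). -/
open MeasureTheory Real

/-!
Write `H(Y' | X) = H(X, Y') - H(X)`. The pair `(X, Y')` is the image of `(ε, X, Y)` under a map
that is injective on the support, so each atom of `(X, Y')` carries the mass of exactly one atom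
of `(ε, X, Y)` and `H(X, Y') = H(ε, X, Y)`. By independence the latter splits as
`H(ε) + H(X, Y)`, and `H(X, Y) - H(X) = H(Y | X)`.
-/

/-- Shannon entropy (in nats) of a random variable `X` taking values in a finite set. -/
noncomputable def shannonEntropy {Ω : Type*} [MeasurableSpace Ω] {S : Type*} [Fintype S]
    (μ : Measure Ω) (X : Ω → S) : ℝ :=
  ∑ x : S, Real.negMulLog ((μ (X ⁻¹' {x})).toReal)

/-- Conditional Shannon entropy `H(Y | X)` of a finitely-valued random variable `Y`
given a finitely-valued random variable `X`:
`H(Y|X) = ∑ₓ P(X = x) * ∑_y negMulLog (P(X = x, Y = y) / P(X = x))`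
(with the conventions `0 * log 0 = 0` and `a / 0 = 0`). -/
noncomputable def condShannonEntropy {Ω : Type*} [MeasurableSpace Ω] {S T : Type*}
    [Fintype S] [Fintype T] (μ : Measure Ω) (Y : Ω → T) (X : Ω → S) : ℝ :=
  ∑ x : S, (μ (X ⁻¹' {x})).toReal *
    ∑ y : T, Real.negMulLog ((μ (X ⁻¹' {x} ∩ Y ⁻¹' {y})).toReal / (μ (X ⁻¹' {x})).toReal)

theorem Finset.apply_sum_of_at_most_one_ne_zero {ι M N : Type*} [AddCommMonoid M]
    [AddCommMonoid N] {φ : M → N} (hφ : φ 0 = 0) {s : Finset ι} {f : ι → M}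
    (h : ∀ i ∈ s, ∀ j ∈ s, f i ≠ 0 → f j ≠ 0 → i = j) :
    φ (∑ i ∈ s, f i) = ∑ i ∈ s, φ (f i) := by
  by_cases hzero : ∀ i ∈ s, f i = 0
  · rw [Finset.sum_eq_zero hzero, hφ, Finset.sum_eq_zero fun i hi => by rw [hzero i hi, hφ]]
  · obtain ⟨i, hi, hfi⟩ : ∃ i ∈ s, f i ≠ 0 := by simpa using hzero
    have hothers : ∀ j ∈ s, j ≠ i → f j = 0 := fun j hj hji =>
      by_contra fun hfj => hji (h j hj i hi hfj hfi)
    rw [Finset.sum_eq_single_of_mem i hi hothers,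
      Finset.sum_eq_single_of_mem i hi fun j hj hji => by rw [hothers j hj hji, hφ]]

theorem mul_negMulLog_div {a b : ℝ} (ha : 0 ≤ a) (hb : 0 < b) :
    b * negMulLog (a / b) = negMulLog a + a * log b := by
  rcases ha.eq_or_lt with rfl | ha
  · simp
  · rw [negMulLog, negMulLog, log_div ha.ne' hb.ne']
    field_simp
    ring

theorem sum_mul_sum_negMulLog_div_sum {ι : Type*} (s : Finset ι) (a : ι → ℝ)
    (ha : ∀ i ∈ s, 0 ≤ a i) :
    (∑ i ∈ s, a i) * ∑ i ∈ s, negMulLog (a i / ∑ j ∈ s, a j)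
      = ∑ i ∈ s, negMulLog (a i) - negMulLog (∑ i ∈ s, a i) := by
  set b := ∑ i ∈ s, a i
  rcases (Finset.sum_nonneg ha).eq_or_lt with hb | hb
  · have hzero := (Finset.sum_eq_zero_iff_of_nonneg ha).mp hb.symm
    have hb0 : b = 0 := hb.symm
    simp only [hb0, zero_mul, negMulLog_zero, sub_zero]
    exact (Finset.sum_eq_zero fun i hi => by rw [hzero i hi, negMulLog_zero]).symm
  · calc b * ∑ i ∈ s, negMulLog (a i / b)
        = ∑ i ∈ s, (negMulLog (a i) + a i * log b) := by
          rw [Finset.mul_sum]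
          exact Finset.sum_congr rfl fun i hi => mul_negMulLog_div (ha i hi) hb
      _ = ∑ i ∈ s, negMulLog (a i) - negMulLog b := by
          rw [Finset.sum_add_distrib, ← Finset.sum_mul, negMulLog]
          ring

section FiniteRandomVariables

variable {Ω A B : Type*} [MeasurableSpace Ω] {μ : Measure Ω}
  [Fintype A] [MeasurableSpace A] [MeasurableSingletonClass A]

theorem sum_measureReal_inter_preimage_singleton [IsFiniteMeasure μ] {Z : Ω → A}
    (hZ : Measurable Z) (s : Set Ω) :
    ∑ a, μ.real (s ∩ Z ⁻¹' {a}) = μ.real s := by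
  simp_rw [Set.inter_comm s, ← measureReal_restrict_apply (hZ (measurableSet_singleton _))]
  rw [sum_measureReal_preimage_singleton _ fun a _ => hZ (measurableSet_singleton a),
    Finset.coe_univ, Set.preimage_univ, measureReal_restrict_apply_univ]

theorem sum_measureReal_preimage_singleton_eq_one [IsProbabilityMeasure μ] {Z : Ω → A}
    (hZ : Measurable Z) : ∑ a, μ.real (Z ⁻¹' {a}) = 1 := by
  simpa using sum_measureReal_inter_preimage_singleton (μ := μ) hZ Set.univ

theorem measureReal_comp_preimage_singleton [DecidableEq B] [IsFiniteMeasure μ] {Z : Ω → A}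
    (hZ : Measurable Z) (f : A → B) (b : B) :
    μ.real ((f ∘ Z) ⁻¹' {b}) = ∑ a ∈ Finset.univ.filter (f · = b), μ.real (Z ⁻¹' {a}) := by
  rw [sum_measureReal_preimage_singleton _ fun a _ => hZ (measurableSet_singleton a)]
  congr 1
  ext ω
  simp

theorem shannonEntropy_comp_of_injOn [Fintype B] [DecidableEq B] [IsFiniteMeasure μ] {Z : Ω → A}
    (hZ : Measurable Z) {f : A → B} (hf : Set.InjOn f {a | μ (Z ⁻¹' {a}) ≠ 0}) :
    shannonEntropy μ (f ∘ Z) = shannonEntropy μ Z := by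
  unfold shannonEntropy
  simp_rw [← measureReal_def, measureReal_comp_preimage_singleton hZ f]
  calc ∑ b, negMulLog (∑ a ∈ Finset.univ.filter (f · = b), μ.real (Z ⁻¹' {a}))
      = ∑ b, ∑ a ∈ Finset.univ.filter (f · = b), negMulLog (μ.real (Z ⁻¹' {a})) := by
        refine Finset.sum_congr rfl fun b _ =>
          Finset.apply_sum_of_at_most_one_ne_zero negMulLog_zero ?_
        intro a ha a' ha' hne hne'
        simp only [Finset.mem_filter, Finset.mem_univ, true_and] at ha ha'
        exact hf ((measureReal_ne_zero_iff).mp hne) ((measureReal_ne_zero_iff).mp hne')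
          (ha.trans ha'.symm)
    _ = ∑ a, negMulLog (μ.real (Z ⁻¹' {a})) := Finset.sum_fiberwise _ f _

theorem shannonEntropy_prod_of_measure_eq_mul [Fintype B] [MeasurableSpace B]
    [MeasurableSingletonClass B] [IsProbabilityMeasure μ] {U : Ω → A} {V : Ω → B}
    (hU : Measurable U) (hV : Measurable V)
    (h : ∀ a b, μ ((fun ω => (U ω, V ω)) ⁻¹' {(a, b)}) = μ (U ⁻¹' {a}) * μ (V ⁻¹' {b})) :
    shannonEntropy μ (fun ω => (U ω, V ω)) = shannonEntropy μ U + shannonEntropy μ V := by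
  unfold shannonEntropy
  simp_rw [Fintype.sum_prod_type, h, ENNReal.toReal_mul, ← measureReal_def, negMulLog_mul,
    Finset.sum_add_distrib, ← Finset.mul_sum, ← Finset.sum_mul,
    sum_measureReal_preimage_singleton_eq_one hU, sum_measureReal_preimage_singleton_eq_one hV,
    one_mul]

theorem condShannonEntropy_eq_shannonEntropy_prod_sub [Fintype B] [IsFiniteMeasure μ]
    (X : Ω → B) {Y : Ω → A} (hY : Measurable Y) :
    condShannonEntropy μ Y X = shannonEntropy μ (fun ω => (X ω, Y ω)) - shannonEntropy μ X := by
  unfold condShannonEntropy shannonEntropy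
  rw [Fintype.sum_prod_type, ← Finset.sum_sub_distrib]
  refine Finset.sum_congr rfl fun x _ => ?_
  simp_rw [← measureReal_def, ← Set.singleton_prod_singleton, Set.mk_preimage_prod,
    ← sum_measureReal_inter_preimage_singleton hY (X ⁻¹' {x})]
  exact sum_mul_sum_negMulLog_div_sum _ _ fun _ _ => measureReal_nonneg

end FiniteRandomVariables

/-- **Theorem 1 of the paper.** If `ε` is independent of `(X, Y)` and the augmentation map
`(e, x, y) ↦ (x, g(e, y))` is one-to-one on the support of `(ε, X, Y)`, then setting
`Y' = g(ε, Y)` we have `H(Y' | X) = H(Y | X) + H(ε)`. -/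
theorem condEntropy_augment_eq_add_entropy
    {Ω E S T : Type*} [MeasurableSpace Ω]
    [Fintype E] [Fintype S] [Fintype T]
    [MeasurableSpace E] [MeasurableSingletonClass E]
    [MeasurableSpace S] [MeasurableSingletonClass S]
    [MeasurableSpace T] [MeasurableSingletonClass T]
    (μ : Measure Ω) [IsProbabilityMeasure μ]
    (X : Ω → S) (Y : Ω → T) (ε : Ω → E)
    (hX : Measurable X) (hY : Measurable Y) (hε : Measurable ε)
    (g : E → T → T)
    (hInd : ∀ (e : E) (x : S) (y : T),
      μ {ω | ε ω = e ∧ X ω = x ∧ Y ω = y}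
        = μ {ω | ε ω = e} * μ {ω | X ω = x ∧ Y ω = y})
    (hInj : Set.InjOn (fun p : E × S × T => (p.2.1, g p.1 p.2.2))
      {p : E × S × T | μ {ω | ε ω = p.1 ∧ X ω = p.2.1 ∧ Y ω = p.2.2} ≠ 0}) :
    condShannonEntropy μ (fun ω => g (ε ω) (Y ω)) X
      = condShannonEntropy μ Y X + shannonEntropy μ ε := by
  classical
  have hXY : Measurable fun ω => (X ω, Y ω) := hX.prodMk hY
  have hεXY : Measurable fun ω => (ε ω, X ω, Y ω) := hε.prodMk hXY
  have hY' : Measurable fun ω => g (ε ω) (Y ω) :=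
    (measurable_of_countable (Function.uncurry g)).comp (hε.prodMk hY)
  have hInd' : ∀ e p, μ ((fun ω => (ε ω, X ω, Y ω)) ⁻¹' {(e, p)})
      = μ (ε ⁻¹' {e}) * μ ((fun ω => (X ω, Y ω)) ⁻¹' {p}) := fun e ⟨x, y⟩ => by
    simpa [Set.preimage, Prod.ext_iff] using hInd e x y
  have hInj' : Set.InjOn (fun p : E × S × T => (p.2.1, g p.1 p.2.2))
      {p | μ ((fun ω => (ε ω, X ω, Y ω)) ⁻¹' {p}) ≠ 0} := by
    simpa [Set.preimage, Prod.ext_iff] using hInj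
  calc condShannonEntropy μ (fun ω => g (ε ω) (Y ω)) X
      = shannonEntropy μ (fun ω => (ε ω, X ω, Y ω)) - shannonEntropy μ X := by
        rw [condShannonEntropy_eq_shannonEntropy_prod_sub X hY',
          ← shannonEntropy_comp_of_injOn hεXY hInj']
        rfl
    _ = condShannonEntropy μ Y X + shannonEntropy μ ε := by
        rw [shannonEntropy_prod_of_measure_eq_mul hε hXY hInd',
          condShannonEntropy_eq_shannonEntropy_prod_sub X hY]
        ring
end

section
/- Let X, Y, and ε be random variables on a probability space, where Y takes values in a finite set 𝒴 with n elements, X takes values in a finite set, and ε is independent of the pair (X, Y). Let g : E × 𝒴 → 𝒴 and set Y' = g(ε, Y). If the map (e, x, y) ↦ (x, g(e, y)) is one-to-one on the support of (ε, X, Y), then H(ε) ≤ log n − H(Y | X). Consequently, if H(Y | X) is within less than H(ε) of the maximum entropy log n, the one-to-one condition cannot hold. -/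
/-!
Since `ε` is independent of `(X, Y)`, conditionally on `X = x` the pair `(ε, Y)` has entropy
`H(ε) + H(Y | X = x)`. Injectivity of `(ε, Y) ↦ g(ε, Y)` on the support makes this the entropy
of `g(ε, Y)`, a variable with `n` values, so it is at most `log n`. Averaging over `x` gives
`H(ε) + H(Y | X) ≤ log n`.
-/

open MeasureTheory Real

namespace Real

lemma negMulLog_sum_of_subsingleton_support {α : Type*} (s : Finset α) (p : α → ℝ)
    (hp : ∀ a ∈ s, ∀ b ∈ s, p a ≠ 0 → p b ≠ 0 → a = b) :
    negMulLog (∑ a ∈ s, p a) = ∑ a ∈ s, negMulLog (p a) := by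
  by_cases hzero : ∀ a ∈ s, p a = 0
  · rw [Finset.sum_eq_zero hzero, negMulLog_zero,
      Finset.sum_eq_zero fun a ha => by rw [hzero a ha, negMulLog_zero]]
  obtain ⟨a₀, ha₀, hpa₀⟩ : ∃ a ∈ s, p a ≠ 0 := by simpa using hzero
  have hrest : ∀ b ∈ s, b ≠ a₀ → p b = 0 := fun b hb hne =>
    by_contra fun hpb => hne (hp b hb a₀ ha₀ hpb hpa₀)
  rw [Finset.sum_eq_single_of_mem a₀ ha₀ hrest,
    Finset.sum_eq_single_of_mem a₀ ha₀ fun b hb hne => by rw [hrest b hb hne, negMulLog_zero]]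

lemma sum_negMulLog_sum_fiberwise_of_injOn {α β : Type*} [Fintype α] [Fintype β]
    [DecidableEq β] (p : α → ℝ) (f : α → β) (hf : Set.InjOn f {a | p a ≠ 0}) :
    ∑ b, negMulLog (∑ a with f a = b, p a) = ∑ a, negMulLog (p a) := by
  rw [← Finset.sum_fiberwise Finset.univ f fun a => negMulLog (p a)]
  refine Finset.sum_congr rfl fun b _ => negMulLog_sum_of_subsingleton_support _ _ ?_
  intro a ha a' ha' hpa hpa'
  rw [Finset.mem_filter] at ha ha'
  exact hf hpa hpa' (ha.2.trans ha'.2.symm)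

lemma sum_negMulLog_le_log_card {α : Type*} [Fintype α] (p : α → ℝ) (hp₀ : ∀ a, 0 ≤ p a)
    (hp₁ : ∑ a, p a = 1) :
    ∑ a, negMulLog (p a) ≤ log (Fintype.card α) := by
  have hα : Nonempty α := by
    by_contra h
    simp [not_nonempty_iff.mp h] at hp₁
  have hn : (0 : ℝ) < Fintype.card α := by exact_mod_cast Fintype.card_pos
  have jensen := concaveOn_negMulLog.le_map_sum (t := Finset.univ)
    (w := fun _ => (Fintype.card α : ℝ)⁻¹) (p := p) (fun _ _ => by positivity)
    (by simp [Finset.card_univ, hn.ne']) fun a _ => Set.mem_Ici.mpr (hp₀ a)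
  simp only [smul_eq_mul, ← Finset.mul_sum, hp₁, mul_one] at jensen
  calc ∑ a, negMulLog (p a) = Fintype.card α * ((Fintype.card α : ℝ)⁻¹ * ∑ a, negMulLog (p a)) :=
        by field_simp
    _ ≤ Fintype.card α * negMulLog (Fintype.card α : ℝ)⁻¹ := by gcongr
    _ = log (Fintype.card α) := by
        rw [negMulLog, log_inv]
        field_simp

lemma sum_negMulLog_mul_of_sum_eq_one {α β : Type*} [Fintype α] [Fintype β] (q : α → ℝ)
    (w : β → ℝ) (hq : ∑ a, q a = 1) (hw : ∑ b, w b = 1) :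
    ∑ a, ∑ b, negMulLog (q a * w b) = ∑ a, negMulLog (q a) + ∑ b, negMulLog (w b) := by
  simp only [negMulLog_mul, Finset.sum_add_distrib, ← Finset.sum_mul, ← Finset.mul_sum, hw, hq,
    one_mul]

lemma sum_negMulLog_add_sum_negMulLog_le_log_card_of_injOn {α β γ : Type*} [Fintype α]
    [Fintype β] [Fintype γ] (q : α → ℝ) (w : β → ℝ) (hq₀ : ∀ a, 0 ≤ q a) (hw₀ : ∀ b, 0 ≤ w b)
    (hq₁ : ∑ a, q a = 1) (hw₁ : ∑ b, w b = 1) (f : α × β → γ)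
    (hf : Set.InjOn f {p | q p.1 * w p.2 ≠ 0}) :
    ∑ a, negMulLog (q a) + ∑ b, negMulLog (w b) ≤ log (Fintype.card γ) := by
  classical
  have hprod₁ : ∑ p : α × β, q p.1 * w p.2 = 1 := by
    rw [Fintype.sum_prod_type, ← Finset.sum_mul_sum, hq₁, hw₁, one_mul]
  calc ∑ a, negMulLog (q a) + ∑ b, negMulLog (w b)
      = ∑ p : α × β, negMulLog (q p.1 * w p.2) := by
        rw [Fintype.sum_prod_type, sum_negMulLog_mul_of_sum_eq_one q w hq₁ hw₁]
    _ = ∑ c, negMulLog (∑ p with f p = c, q p.1 * w p.2) :=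
        (sum_negMulLog_sum_fiberwise_of_injOn _ f hf).symm
    _ ≤ log (Fintype.card γ) := by
        refine sum_negMulLog_le_log_card _ (fun c => Finset.sum_nonneg fun p _ =>
          mul_nonneg (hq₀ _) (hw₀ _)) ?_
        exact (Finset.sum_fiberwise _ _ _).trans hprod₁

lemma sum_negMulLog_add_condEntropy_le_log_card {α ι β γ : Type*} [Fintype α] [Fintype ι]
    [Fintype β] [Fintype γ] (q : α → ℝ) (r : ι → β → ℝ) (s : ι → ℝ) (hq₀ : ∀ a, 0 ≤ q a)
    (hr₀ : ∀ i b, 0 ≤ r i b) (hq₁ : ∑ a, q a = 1) (hrs : ∀ i, ∑ b, r i b = s i)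
    (hs₁ : ∑ i, s i = 1) (g : α → β → γ)
    (hg : Set.InjOn (fun u : α × ι × β => (u.2.1, g u.1 u.2.2))
      {u | q u.1 * r u.2.1 u.2.2 ≠ 0}) :
    ∑ a, negMulLog (q a) + ∑ i, s i * ∑ b, negMulLog (r i b / s i) ≤ log (Fintype.card γ) := by
  have hgi : ∀ i, Set.InjOn (Function.uncurry g) {p | q p.1 * r i p.2 ≠ 0} := by
    intro i p hp p' hp' hgp
    have := @hg (p.1, i, p.2) hp (p'.1, i, p'.2) hp' (Prod.ext rfl hgp)
    simpa [Prod.ext_iff] using this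
  have hterm : ∀ i, s i * (∑ a, negMulLog (q a) + ∑ b, negMulLog (r i b / s i))
      ≤ s i * log (Fintype.card γ) := by
    intro i
    by_cases hsi : s i = 0
    · simp [hsi]
    have hs₀ : 0 ≤ s i := hrs i ▸ Finset.sum_nonneg fun b _ => hr₀ i b
    refine mul_le_mul_of_nonneg_left ?_ hs₀
    refine sum_negMulLog_add_sum_negMulLog_le_log_card_of_injOn q _ hq₀
      (fun b => div_nonneg (hr₀ i b) hs₀) hq₁ (by rw [← Finset.sum_div, hrs i, div_self hsi])
      _ ((hgi i).mono ?_)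
    intro p hp hzero
    rw [Set.mem_ofPred_eq, ← mul_div_assoc, hzero, zero_div] at hp
    exact hp rfl
  calc ∑ a, negMulLog (q a) + ∑ i, s i * ∑ b, negMulLog (r i b / s i)
      = ∑ i, s i * (∑ a, negMulLog (q a) + ∑ b, negMulLog (r i b / s i)) := by
        simp only [mul_add, Finset.sum_add_distrib, ← Finset.sum_mul, hs₁, one_mul]
    _ ≤ ∑ i, s i * log (Fintype.card γ) := Finset.sum_le_sum fun i _ => hterm i
    _ = log (Fintype.card γ) := by rw [← Finset.sum_mul, hs₁, one_mul]

end Real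

namespace MeasureTheory

lemma measureReal_eq_sum_measureReal_preimage_singleton_inter {Ω α : Type*} [MeasurableSpace Ω]
    [Fintype α] [MeasurableSpace α] [MeasurableSingletonClass α] (μ : Measure Ω)
    [IsFiniteMeasure μ] {f : Ω → α} (hf : Measurable f) (A : Set Ω) :
    μ.real A = ∑ a, μ.real (f ⁻¹' {a} ∩ A) := by
  have := sum_measureReal_preimage_singleton (μ := μ.restrict A) Finset.univ
    fun a _ => hf (measurableSet_singleton a)
  simpa [measureReal_restrict_apply (hf (measurableSet_singleton _))] using this.symm

lemma sum_measureReal_preimage_singleton_eq_one {Ω α : Type*} [MeasurableSpace Ω] [Fintype α]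
    [MeasurableSpace α] [MeasurableSingletonClass α] (μ : Measure Ω) [IsProbabilityMeasure μ]
    {f : Ω → α} (hf : Measurable f) :
    ∑ a, μ.real (f ⁻¹' {a}) = 1 := by
  simpa using (measureReal_eq_sum_measureReal_preimage_singleton_inter μ hf Set.univ).symm

end MeasureTheory

/-- Appendix A remark: if `ε` is independent of `(X, Y)` and the map `(e, x, y) ↦ (x, g(e, y))`
is one-to-one on the support of `(ε, X, Y)`, where `Y` takes values in a finite set with `n`
elements, then `H(ε) ≤ log n - H(Y | X)`. Hence when `H(Y | X)` is within less than `H(ε)` of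
the maximal entropy `log n`, the one-to-one condition cannot hold. -/
theorem entropy_noise_le_log_card_sub_condEntropy
    {Ω E S T : Type*} [MeasurableSpace Ω]
    [Fintype E] [Fintype S] [Fintype T]
    [MeasurableSpace E] [MeasurableSingletonClass E]
    [MeasurableSpace S] [MeasurableSingletonClass S]
    [MeasurableSpace T] [MeasurableSingletonClass T]
    (μ : Measure Ω) [IsProbabilityMeasure μ]
    (X : Ω → S) (Y : Ω → T) (ε : Ω → E)
    (hX : Measurable X) (hY : Measurable Y) (hε : Measurable ε)
    (g : E → T → T)
    (hInd : ∀ (e : E) (x : S) (y : T),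
      μ {ω | ε ω = e ∧ X ω = x ∧ Y ω = y}
        = μ {ω | ε ω = e} * μ {ω | X ω = x ∧ Y ω = y})
    (hInj : Set.InjOn (fun p : E × S × T => (p.2.1, g p.1 p.2.2))
      {p : E × S × T | μ {ω | ε ω = p.1 ∧ X ω = p.2.1 ∧ Y ω = p.2.2} ≠ 0}) :
    shannonEntropy μ ε ≤ Real.log (Fintype.card T) - condShannonEntropy μ Y X := by
  have hfiber : ∀ x, ∑ y, μ.real (X ⁻¹' {x} ∩ Y ⁻¹' {y}) = μ.real (X ⁻¹' {x}) := fun x => by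
    simp_rw [measureReal_eq_sum_measureReal_preimage_singleton_inter μ hY (X ⁻¹' {x}),
      Set.inter_comm]
  have hsupport : Set.InjOn (fun u : E × S × T => (u.2.1, g u.1 u.2.2))
      {u | μ.real (ε ⁻¹' {u.1}) * μ.real (X ⁻¹' {u.2.1} ∩ Y ⁻¹' {u.2.2}) ≠ 0} := by
    refine hInj.mono ?_
    intro u hu hzero
    refine hu ?_
    show (μ {ω | ε ω = u.1}).toReal * (μ {ω | X ω = u.2.1 ∧ Y ω = u.2.2}).toReal = 0
    rw [← ENNReal.toReal_mul, ← hInd, hzero, ENNReal.toReal_zero]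
  rw [le_sub_iff_add_le]
  exact sum_negMulLog_add_condEntropy_le_log_card _ _ _ (fun _ => measureReal_nonneg)
    (fun _ _ => measureReal_nonneg) (sum_measureReal_preimage_singleton_eq_one μ hε) hfiber
    (sum_measureReal_preimage_singleton_eq_one μ hX) g hsupport
end

section
/- Let X, Y, and ε be random variables on a probability space taking values in finite sets, with ε independent of the pair (X, Y). Let h : E × 𝒳 → 𝒳' be a map into a finite set such that (e, x) ↦ h(e, x) is one-to-one on the support of (ε, X), and set X' = h(ε, X) and Y' = Y. Then H(Y' | X') = H(Y | X); that is, the augmentation is CE-preserving. -/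
open MeasureTheory Real

/-!
Conditioning on the input enlarged by independent noise does not change the conditional entropy:
on an atom `{ε = e, X = x}` of positive mass the conditional law of `Y` is its conditional law
given `X = x`, and the weights `P(ε = e)` sum to one. Since `(e, x) ↦ h(e, x)` is injective on
the atoms of positive mass, `h(ε, X)` determines `(ε, X)` almost surely, so conditioning on it is
conditioning on `(ε, X)`.
-/

lemma Set.preimage_prodMk_singleton {Ω A B : Type*} (W : Ω → B) (Z : Ω → A) (p : B × A) :
    (fun ω => (W ω, Z ω)) ⁻¹' {p} = W ⁻¹' {p.1} ∩ Z ⁻¹' {p.2} := by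
  rw [← Set.mk_preimage_prod, Set.singleton_prod_singleton]

lemma Real.mul_mul_sum_negMulLog_mul_div_mul {ι : Type*} [Fintype ι] (c m : ℝ) (q : ι → ℝ) :
    c * m * ∑ i, negMulLog (c * q i / (c * m)) = c * (m * ∑ i, negMulLog (q i / m)) := by
  rcases eq_or_ne c 0 with rfl | hc
  · simp
  · simp_rw [mul_div_mul_left _ _ hc, mul_assoc]

section

variable {Ω A B T : Type*} [MeasurableSpace Ω] {μ : Measure Ω}

lemma ae_measure_preimage_singleton_ne_zero [Countable A] (Z : Ω → A) :
    ∀ᵐ ω ∂μ, μ (Z ⁻¹' {Z ω}) ≠ 0 := by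
  have hnull : μ (Z ⁻¹' {a | μ (Z ⁻¹' {a}) = 0}) = 0 :=
    (measure_preimage_eq_zero_iff_of_countable (Set.to_countable _)).2 fun _ ha => ha
  exact ae_iff.2 (measure_mono_null (fun ω hω => not_not.1 hω) hnull)

lemma preimage_comp_singleton_ae_eq [Countable A] {Z : Ω → A} {g : A → B}
    (hg : Set.InjOn g {a | μ (Z ⁻¹' {a}) ≠ 0}) {a : A} (ha : μ (Z ⁻¹' {a}) ≠ 0) :
    (g ∘ Z) ⁻¹' {g a} =ᵐ[μ] Z ⁻¹' {a} := by
  filter_upwards [ae_measure_preimage_singleton_ne_zero Z] with ω hω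
  exact propext ⟨fun h => hg hω ha h, fun h => congrArg g h⟩

lemma exists_measure_preimage_singleton_ne_zero_of_comp [Countable A] {Z : Ω → A} {g : A → B}
    {b : B} (hb : μ ((g ∘ Z) ⁻¹' {b}) ≠ 0) : ∃ a, μ (Z ⁻¹' {a}) ≠ 0 ∧ g a = b := by
  by_contra! H
  exact hb <| (measure_preimage_eq_zero_iff_of_countable (Set.to_countable (g ⁻¹' {b}))).2
    fun a ha => not_not.1 fun h => H a h ha

variable [Fintype T]

theorem condShannonEntropy_comp_of_injOn [Fintype A] [Fintype B] (Y : Ω → T) (Z : Ω → A)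
    {g : A → B} (hg : Set.InjOn g {a | μ (Z ⁻¹' {a}) ≠ 0}) :
    condShannonEntropy μ Y (g ∘ Z) = condShannonEntropy μ Y Z := by
  let F : Set Ω → ℝ := fun s =>
    (μ s).toReal * ∑ y, negMulLog ((μ (s ∩ Y ⁻¹' {y})).toReal / (μ s).toReal)
  have hF_congr {s t : Set Ω} (hst : s =ᵐ[μ] t) : F s = F t := by
    simp only [F, measure_congr hst, fun y => measure_congr (hst.inter (ae_eq_refl (Y ⁻¹' {y})))]
  have hF_supp {s : Set Ω} (hs : F s ≠ 0) : μ s ≠ 0 := fun h0 => hs (by simp [F, h0])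
  have hF_comp {a : A} (ha : μ (Z ⁻¹' {a}) ≠ 0) : F ((g ∘ Z) ⁻¹' {g a}) = F (Z ⁻¹' {a}) :=
    hF_congr (preimage_comp_singleton_ae_eq hg ha)
  show ∑ b, F ((g ∘ Z) ⁻¹' {b}) = ∑ a, F (Z ⁻¹' {a})
  symm
  refine Finset.sum_bij_ne_zero (fun a _ _ => g a) (fun _ _ _ => Finset.mem_univ _)
    (fun a₁ _ h₁ a₂ _ h₂ he => hg (hF_supp h₁) (hF_supp h₂) he) ?_
    (fun a _ ha => (hF_comp (hF_supp ha)).symm)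
  intro b _ hb
  obtain ⟨a, ha, rfl⟩ := exists_measure_preimage_singleton_ne_zero_of_comp (hF_supp hb)
  exact ⟨a, Finset.mem_univ _, hF_comp ha ▸ hb, rfl⟩

variable [MeasurableSpace T] [MeasurableSingletonClass T]

lemma sum_measure_inter_preimage_singleton {Y : Ω → T} (hY : Measurable Y) (s : Set Ω) :
    ∑ y, μ (s ∩ Y ⁻¹' {y}) = μ s := by
  have := sum_measure_preimage_singleton (μ := μ.restrict s) Finset.univ
    fun y _ => hY (measurableSet_singleton y)
  simpa [Measure.restrict_apply (hY (measurableSet_singleton _)), Set.inter_comm] using this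

lemma sum_toReal_measure_preimage_singleton [IsProbabilityMeasure μ] {Y : Ω → T}
    (hY : Measurable Y) : ∑ y, (μ (Y ⁻¹' {y})).toReal = 1 := by
  have := sum_measure_inter_preimage_singleton (μ := μ) hY Set.univ
  simp only [Set.univ_inter, measure_univ] at this
  rw [← ENNReal.toReal_sum fun _ _ => measure_ne_top μ _, this, ENNReal.toReal_one]

lemma measure_preimage_inter_preimage_eq_mul {W : Ω → B} {Z : Ω → A} {Y : Ω → T}
    (hY : Measurable Y) (hInd : ∀ b a y, μ (W ⁻¹' {b} ∩ (Z ⁻¹' {a} ∩ Y ⁻¹' {y}))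
      = μ (W ⁻¹' {b}) * μ (Z ⁻¹' {a} ∩ Y ⁻¹' {y})) (b : B) (a : A) :
    μ (W ⁻¹' {b} ∩ Z ⁻¹' {a}) = μ (W ⁻¹' {b}) * μ (Z ⁻¹' {a}) := by
  rw [← sum_measure_inter_preimage_singleton hY (W ⁻¹' {b} ∩ Z ⁻¹' {a}),
    ← sum_measure_inter_preimage_singleton hY (Z ⁻¹' {a}), Finset.mul_sum]
  simp_rw [Set.inter_assoc, hInd]

theorem condShannonEntropy_prodMk_of_indep [IsProbabilityMeasure μ] [Fintype A] [Fintype B]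
    [MeasurableSpace B] [MeasurableSingletonClass B]
    {W : Ω → B} {Z : Ω → A} {Y : Ω → T} (hW : Measurable W) (hY : Measurable Y)
    (hInd : ∀ b a y, μ (W ⁻¹' {b} ∩ (Z ⁻¹' {a} ∩ Y ⁻¹' {y}))
      = μ (W ⁻¹' {b}) * μ (Z ⁻¹' {a} ∩ Y ⁻¹' {y})) :
    condShannonEntropy μ Y (fun ω => (W ω, Z ω)) = condShannonEntropy μ Y Z := by
  unfold condShannonEntropy
  simp_rw [Fintype.sum_prod_type, Set.preimage_prodMk_singleton, Set.inter_assoc, hInd,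
    measure_preimage_inter_preimage_eq_mul hY hInd, ENNReal.toReal_mul,
    mul_mul_sum_negMulLog_mul_div_mul, ← Finset.mul_sum, ← Finset.sum_mul,
    sum_toReal_measure_preimage_singleton hW, one_mul]

end

theorem condEntropy_input_augment_eq_general
    {Ω E S S' T : Type*} [MeasurableSpace Ω]
    [Fintype E] [Fintype S] [Fintype S'] [Fintype T]
    [MeasurableSpace E] [MeasurableSingletonClass E]
    [MeasurableSpace T] [MeasurableSingletonClass T]
    (μ : Measure Ω) [IsProbabilityMeasure μ]
    (X : Ω → S) (Y : Ω → T) (ε : Ω → E)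
    (hY : Measurable Y) (hε : Measurable ε)
    (h : E → S → S')
    (hInd : ∀ (e : E) (x : S) (y : T),
      μ {ω | ε ω = e ∧ X ω = x ∧ Y ω = y}
        = μ {ω | ε ω = e} * μ {ω | X ω = x ∧ Y ω = y})
    (hInj : Set.InjOn (fun p : E × S => h p.1 p.2)
      {p : E × S | μ {ω | ε ω = p.1 ∧ X ω = p.2} ≠ 0}) :
    condShannonEntropy μ Y (fun ω => h (ε ω) (X ω)) = condShannonEntropy μ Y X := by
  have hInj' : Set.InjOn (fun p : E × S => h p.1 p.2)
      {p | μ ((fun ω => (ε ω, X ω)) ⁻¹' {p}) ≠ 0} := by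
    simp only [Set.preimage_prodMk_singleton]
    exact hInj
  calc condShannonEntropy μ Y (fun ω => h (ε ω) (X ω))
      = condShannonEntropy μ Y (fun ω => (ε ω, X ω)) :=
        condShannonEntropy_comp_of_injOn Y _ hInj'
    _ = condShannonEntropy μ Y X := condShannonEntropy_prodMk_of_indep hε hY hInd

/-- CE-preserving augmentation of the inputs: if `ε` is independent of `(X, Y)` and
`(e, x) ↦ h(e, x)` is one-to-one on the support of `(ε, X)`, then with `X' = h(ε, X)` and
`Y' = Y` we have `H(Y' | X') = H(Y | X)`. -/
theorem condEntropy_input_augment_eq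
    {Ω E S S' T : Type*} [MeasurableSpace Ω]
    [Fintype E] [Fintype S] [Fintype S'] [Fintype T]
    [MeasurableSpace E] [MeasurableSingletonClass E]
    [MeasurableSpace S] [MeasurableSingletonClass S]
    [MeasurableSpace S'] [MeasurableSingletonClass S']
    [MeasurableSpace T] [MeasurableSingletonClass T]
    (μ : Measure Ω) [IsProbabilityMeasure μ]
    (X : Ω → S) (Y : Ω → T) (ε : Ω → E)
    (hX : Measurable X) (hY : Measurable Y) (hε : Measurable ε)
    (h : E → S → S')
    (hInd : ∀ (e : E) (x : S) (y : T),
      μ {ω | ε ω = e ∧ X ω = x ∧ Y ω = y}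
        = μ {ω | ε ω = e} * μ {ω | X ω = x ∧ Y ω = y})
    (hInj : Set.InjOn (fun p : E × S => h p.1 p.2)
      {p : E × S | μ {ω | ε ω = p.1 ∧ X ω = p.2} ≠ 0}) :
    condShannonEntropy μ Y (fun ω => h (ε ω) (X ω)) = condShannonEntropy μ Y X :=
  condEntropy_input_augment_eq_general μ X Y ε hY hε h hInd hInj
end
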